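/- arXiv:2408.09418 — 4 statements merged into one kernel-verified Lean document; each statement's English description precedes it below -/
import Mathlib

section
/- Identifiability of the multi-layer GoM model: Let Π and Π̃ be N×K membership matrices (entries in [0,1], every row sums to 1), each containing at least one pure subject in every latent class, i.e. there exist index sets 𝓘 and 𝓘̃ of K rows with Π(𝓘,:) = I_{K×K} and Π̃(𝓘̃,:) = I_{K×K}. Let Θ₁,…,Θ_L and Θ̃₁,…,Θ̃_L be J×K matrices with entries in [0,M] satisfying rank(Σ_{l=1}^{L} Θ_l'Θ_l) = K and rank(Σ_{l=1}^{L} Θ̃_l'Θ̃_l) = K. If ΠΘ_l' = Π̃Θ̃_l' for every l ∈ [L], then there exists a K×K permutation matrix 𝒫 such that Π̃ = Π𝒫 and Θ̃_l = Θ_l𝒫 for every l ∈ [L]. -/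
open Matrix

/-- entries of a permutation matrix -/
private lemma permMatrix_apply {K : ℕ} (σ : Equiv.Perm (Fin K)) (i j : Fin K) :
    σ.permMatrix ℝ i j = if σ i = j then 1 else 0 := by
  simp [Equiv.Perm.permMatrix, PEquiv.toMatrix_apply, Equiv.toPEquiv_apply, eq_comm]

/-- A nonnegative matrix with row sums 1 and a nonnegative left inverse with row sums 1
is a permutation matrix. -/
private lemma perm_of_doubly (K : ℕ) (P Q : Matrix (Fin K) (Fin K) ℝ)
    (hP0 : ∀ i j, 0 ≤ P i j) (hQ0 : ∀ i j, 0 ≤ Q i j)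
    (hProw : ∀ i, ∑ j, P i j = 1) (hQrow : ∀ i, ∑ j, Q i j = 1)
    (hQP : Q * P = 1) :
    ∃ σ : Equiv.Perm (Fin K), P = σ.permMatrix ℝ := by
  -- for each i pick k with Q i k > 0
  have hpick : ∀ i : Fin K, ∃ k, 0 < Q i k := by
    intro i
    by_contra h
    push_neg at h
    have : ∑ j, Q i j = 0 := Finset.sum_eq_zero fun j _ => le_antisymm (h j) (hQ0 i j)
    rw [hQrow i] at this; norm_num at this
  choose f hf using hpick
  have hPz : ∀ i j, j ≠ i → P (f i) j = 0 := by
    intro i j hij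
    have h0 : (Q * P) i j = 0 := by
      rw [hQP]; exact Matrix.one_apply_ne (Ne.symm hij)
    rw [Matrix.mul_apply] at h0
    have hterm : Q i (f i) * P (f i) j = 0 := by
      have := (Finset.sum_eq_zero_iff_of_nonneg
        (fun k _ => mul_nonneg (hQ0 i k) (hP0 k j))).mp h0 (f i) (Finset.mem_univ _)
      exact this
    have := hf i
    rcases mul_eq_zero.mp hterm with h | h
    · exact absurd h (ne_of_gt this)
    · exact h
  have hP1 : ∀ i, P (f i) i = 1 := by
    intro i
    have := hProw (f i)
    rwa [Finset.sum_eq_single i (fun j _ hji => hPz i j hji) (by simp)] at this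
  have hfinj : Function.Injective f := by
    intro i i' h
    by_contra hne
    have h1 := hP1 i'
    rw [← h] at h1
    rw [hPz i i' (Ne.symm hne)] at h1
    norm_num at h1
  have hfbij : Function.Bijective f := (Finite.injective_iff_bijective).mp hfinj
  let e := Equiv.ofBijective f hfbij
  refine ⟨e.symm, ?_⟩
  ext k j
  rw [permMatrix_apply]
  have hk : f (e.symm k) = k := e.apply_symm_apply k
  by_cases h : e.symm k = j
  · rw [if_pos h, ← h]
    have := hP1 (e.symm k); rwa [hk] at this
  · rw [if_neg h]
    have := hPz (e.symm k) j (fun hh => h hh.symm); rwa [hk] at this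

private lemma isUnit_of_rank_eq {K : ℕ} (S : Matrix (Fin K) (Fin K) ℝ)
    (h : S.rank = K) : IsUnit S := by
  rw [← Matrix.mulVec_injective_iff_isUnit]
  have hr : LinearMap.range S.mulVecLin = ⊤ := by
    apply Submodule.eq_top_of_finrank_eq
    rw [show Module.finrank ℝ (LinearMap.range S.mulVecLin) = S.rank from rfl, h]
    simp [Module.finrank_pi]
  have hsurj : Function.Surjective S.mulVecLin := LinearMap.range_eq_top.mp hr
  have hinj : Function.Injective S.mulVecLin :=
    (LinearMap.injective_iff_surjective).mpr hsurj
  exact hinj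

/-- cancel an invertible matrix on the right -/
private lemma cancel_right {A K : ℕ} (S : Matrix (Fin K) (Fin K) ℝ) (hS : IsUnit S)
    (X Y : Matrix (Fin A) (Fin K) ℝ) (h : X * S = Y * S) : X = Y := by
  have hdet : IsUnit S.det := (Matrix.isUnit_iff_isUnit_det S).mp hS
  calc X = X * S * S⁻¹ := (Matrix.mul_nonsing_inv_cancel_right (A := S) X hdet).symm
    _ = Y * S * S⁻¹ := by rw [h]
    _ = Y := Matrix.mul_nonsing_inv_cancel_right (A := S) Y hdet

private lemma submatrix_mul_id {A B C D : ℕ} (X : Matrix (Fin A) (Fin B) ℝ)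
    (Y : Matrix (Fin B) (Fin C) ℝ) (g : Fin D → Fin A) :
    (X * Y).submatrix g id = X.submatrix g id * Y := by
  ext i j
  simp [Matrix.mul_apply, Matrix.submatrix_apply]

/-- **Identifiability of the multi-layer GoM model.**  If two parameter tuples
`(Pim, Θ)` and `(Pit, Θt)` (membership matrices with entries in `[0,1]`, rows summing to `1`,
each with a set of pure subjects whose rows form the identity, and item parameter matrices with
entries in `[0,M]` such that `∑ l, (Θ l)ᵀ * Θ l` has rank `K`) generate the same population
response matrices `Pim * (Θ l)ᵀ = Pit * (Θt l)ᵀ` for all layers, then they agree up to a common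
permutation matrix. -/
theorem identifiability_multilayer_GoM
    (N J K L M : ℕ) (hN : 0 < N) (hJ : 0 < J) (hK : 0 < K) (hL : 0 < L) (hM : 0 < M)
    (hKNJ : K ≤ min N J)
    (Pim Pit : Matrix (Fin N) (Fin K) ℝ)
    (hPim01 : ∀ i k, Pim i k ∈ Set.Icc (0 : ℝ) 1)
    (hPimRow : ∀ i, ∑ k, Pim i k = 1)
    (hPit01 : ∀ i k, Pit i k ∈ Set.Icc (0 : ℝ) 1)
    (hPitRow : ∀ i, ∑ k, Pit i k = 1)
    (g gt : Fin K → Fin N)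
    (hg : Pim.submatrix g id = 1)
    (hgt : Pit.submatrix gt id = 1)
    (Θ Θt : Fin L → Matrix (Fin J) (Fin K) ℝ)
    (hΘ : ∀ l j k, Θ l j k ∈ Set.Icc (0 : ℝ) (M : ℝ))
    (hΘt : ∀ l j k, Θt l j k ∈ Set.Icc (0 : ℝ) (M : ℝ))
    (hrank : (∑ l, (Θ l)ᵀ * Θ l).rank = K)
    (hrankt : (∑ l, (Θt l)ᵀ * Θt l).rank = K)
    (heq : ∀ l, Pim * (Θ l)ᵀ = Pit * (Θt l)ᵀ) :
    ∃ σ : Equiv.Perm (Fin K),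
      Pit = Pim * σ.permMatrix ℝ ∧ ∀ l, Θt l = Θ l * σ.permMatrix ℝ := by
  classical
  set S : Matrix (Fin K) (Fin K) ℝ := ∑ l, (Θ l)ᵀ * Θ l with hS
  set St : Matrix (Fin K) (Fin K) ℝ := ∑ l, (Θt l)ᵀ * Θt l with hSt
  have hSu : IsUnit S := isUnit_of_rank_eq S (by simpa using hrank)
  have hStu : IsUnit St := isUnit_of_rank_eq St (by simpa using hrankt)
  set B : Matrix (Fin K) (Fin K) ℝ := ∑ l, (Θt l)ᵀ * Θ l with hB
  set C : Matrix (Fin K) (Fin K) ℝ := ∑ l, (Θ l)ᵀ * Θt l with hC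
  -- key matrix identities
  have e1 : Pim * S = Pit * B := by
    rw [hS, hB, Matrix.mul_sum, Matrix.mul_sum]
    exact Finset.sum_congr rfl fun l _ => by
      rw [← Matrix.mul_assoc, ← Matrix.mul_assoc, heq l]
  have e2 : Pim * C = Pit * St := by
    rw [hC, hSt, Matrix.mul_sum, Matrix.mul_sum]
    exact Finset.sum_congr rfl fun l _ => by
      rw [← Matrix.mul_assoc, ← Matrix.mul_assoc, heq l]
  set P : Matrix (Fin K) (Fin K) ℝ := Pit.submatrix g id with hPdef
  set Q : Matrix (Fin K) (Fin K) ℝ := Pim.submatrix gt id with hQdef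
  -- take pure rows
  have r1 : S = P * B := by
    have := congrArg (fun X => X.submatrix g id) e1
    simpa [submatrix_mul_id, hg] using this
  have r2 : C = P * St := by
    have := congrArg (fun X => X.submatrix g id) e2
    simpa [submatrix_mul_id, hg] using this
  have r3 : Q * S = B := by
    have := congrArg (fun X => X.submatrix gt id) e1
    simpa [submatrix_mul_id, hgt] using this
  have r4 : Q * C = St := by
    have := congrArg (fun X => X.submatrix gt id) e2
    simpa [submatrix_mul_id, hgt] using this
  have hPQ : P * Q = 1 := by
    apply cancel_right S hSu
    rw [Matrix.one_mul, Matrix.mul_assoc, r3, ← r1]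
  have hQP : Q * P = 1 := by
    apply cancel_right St hStu
    rw [Matrix.one_mul, Matrix.mul_assoc, ← r2, r4]
  -- nonnegativity and row sums
  have hP0 : ∀ i j, 0 ≤ P i j := fun i j => (hPit01 (g i) j).1
  have hQ0 : ∀ i j, 0 ≤ Q i j := fun i j => (hPim01 (gt i) j).1
  have hProw : ∀ i, ∑ j, P i j = 1 := fun i => hPitRow (g i)
  have hQrow : ∀ i, ∑ j, Q i j = 1 := fun i => hPimRow (gt i)
  obtain ⟨σ, hσ⟩ := perm_of_doubly K P Q hP0 hQ0 hProw hQrow hQP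
  refine ⟨σ, ?_, ?_⟩
  · -- Pit = Pim * P
    have : Pit = Pim * P := by
      apply cancel_right St hStu
      rw [Matrix.mul_assoc, ← r2, e2]
    rw [this, hσ]
  · -- Θt l = Θ l * Qᵀ and Qᵀ = P
    have hQT : Qᵀ = P := by
      have hPPT : Pᵀ * P = 1 := by
        rw [hσ]
        ext i j
        simp only [Matrix.mul_apply, Matrix.transpose_apply, permMatrix_apply, Matrix.one_apply]
        rw [Finset.sum_eq_single (σ⁻¹ i)]
        · by_cases h : i = j
          · subst h; simp
          · rw [if_neg h]
            have : ¬ σ (σ⁻¹ i) = j := by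
              rw [show σ (σ⁻¹ i) = i from σ.apply_symm_apply i]; exact h
            rw [if_neg this, mul_zero]
        · intro k _ hk
          have : ¬ σ k = i := fun hh => hk (by rw [← hh]; simp)
          rw [if_neg this, zero_mul]
        · simp
      have : Q = Pᵀ := by
        calc Q = 1 * Q := (Matrix.one_mul Q).symm
          _ = Pᵀ * P * Q := by rw [hPPT]
          _ = Pᵀ * (P * Q) := by rw [Matrix.mul_assoc]
          _ = Pᵀ := by rw [hPQ, Matrix.mul_one]
      rw [this, Matrix.transpose_transpose]
    intro l
    -- (Θ l)ᵀ = P * (Θt l)ᵀ, hence Q * (Θ l)ᵀ = (Θt l)ᵀ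
    have hθ1 : (Θ l)ᵀ = P * (Θt l)ᵀ := by
      have := congrArg (fun X => X.submatrix g id) (heq l)
      simpa [submatrix_mul_id, hg] using this
    have hθ2 : (Θt l)ᵀ = Q * (Θ l)ᵀ := by
      rw [hθ1, ← Matrix.mul_assoc, hQP, Matrix.one_mul]
    have : Θt l = Θ l * Qᵀ := by
      have := congrArg Matrix.transpose hθ2
      simpa [Matrix.transpose_mul] using this
    rw [this, hQT, hσ]
end

section
/- Ideal Simplex structure (first part of Lemma 1): Suppose rank(Σ_{l=1}^{L} Θ_l'Θ_l) = K and Π is an N×K membership matrix with pure-subject index set 𝓘 satisfying Π(𝓘,:) = I_{K×K}. Let 𝓢 = Σ_{l=1}^{L} 𝓡_l𝓡_l' with 𝓡_l = ΠΘ_l', and suppose 𝓢 = UΛU' where U is an N×K matrix with orthonormal columns (U'U = I_{K×K}) and Λ is an invertible K×K diagonal matrix (the leading-K eigendecomposition of the rank-K matrix 𝓢). Then U = Π U(𝓘,:), where U(𝓘,:) is the K×K submatrix of U formed by the rows indexed by 𝓘. -/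
open Matrix

/-- **Ideal Simplex structure (first part of Lemma 1).**  If `S = ∑ l, 𝓡 l * (𝓡 l)ᵀ` with
`𝓡 l = Pim * (Θ l)ᵀ`, `rank (∑ l, (Θ l)ᵀ * Θ l) = K`, and `S = U * Λ * Uᵀ` is its leading-`K`
eigendecomposition (`Uᵀ * U = 1`, `Λ` invertible diagonal), then `U = Pim * U(𝓘,:)` where
`U(𝓘,:)` is the submatrix of `U` formed by the pure-subject rows. -/
theorem ideal_simplex_structure
    (N J K L M : ℕ) (hN : 0 < N) (hJ : 0 < J) (hK : 0 < K) (hL : 0 < L) (hM : 0 < M)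
    (hKNJ : K ≤ min N J)
    (Pim : Matrix (Fin N) (Fin K) ℝ)
    (hPim01 : ∀ i k, Pim i k ∈ Set.Icc (0 : ℝ) 1)
    (hPimRow : ∀ i, ∑ k, Pim i k = 1)
    (g : Fin K → Fin N)
    (hg : Pim.submatrix g id = 1)
    (Θ : Fin L → Matrix (Fin J) (Fin K) ℝ)
    (hΘ : ∀ l j k, Θ l j k ∈ Set.Icc (0 : ℝ) (M : ℝ))
    (hrank : (∑ l, (Θ l)ᵀ * Θ l).rank = K)
    (S : Matrix (Fin N) (Fin N) ℝ)
    (hS : S = ∑ l, (Pim * (Θ l)ᵀ) * (Pim * (Θ l)ᵀ)ᵀ)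
    (U : Matrix (Fin N) (Fin K) ℝ) (Λ : Matrix (Fin K) (Fin K) ℝ)
    (hU : Uᵀ * U = 1) (hΛdiag : Λ.IsDiag) (hΛinv : IsUnit Λ.det)
    (hdecomp : S = U * Λ * Uᵀ) :
    U = Pim * U.submatrix g id := by
  have hΛ : Λ * Λ⁻¹ = 1 := Matrix.mul_nonsing_inv Λ hΛinv
  have hSB : S = Pim * (∑ l, (Θ l)ᵀ * Θ l) * Pimᵀ := by
    rw [hS]
    rw [Matrix.mul_assoc, Matrix.sum_mul, Matrix.mul_sum]
    exact Finset.sum_congr rfl fun l _ => by simp [Matrix.transpose_mul, Matrix.mul_assoc]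
  have hUeq : U = Pim * ((∑ l, (Θ l)ᵀ * Θ l) * Pimᵀ * U * Λ⁻¹) := by
    have h1 : U = S * U * Λ⁻¹ := by
      rw [hdecomp, Matrix.mul_assoc (U * Λ) Uᵀ U, hU, Matrix.mul_one,
        Matrix.mul_assoc, hΛ, Matrix.mul_one]
    calc U = S * U * Λ⁻¹ := h1
    _ = Pim * ((∑ l, (Θ l)ᵀ * Θ l) * Pimᵀ * U * Λ⁻¹) := by
        rw [hSB]; simp only [Matrix.mul_assoc]
  have hsub : U.submatrix g id = (∑ l, (Θ l)ᵀ * Θ l) * Pimᵀ * U * Λ⁻¹ := by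
    nth_rewrite 1 [hUeq]
    rw [Matrix.submatrix_mul _ _ g id id Function.bijective_id, hg, Matrix.one_mul, Matrix.submatrix_id_id]
  rw [hsub, ← hUeq]
end

section
/- Exact recovery of memberships from the eigenvector simplex: Under the hypotheses of Lemma 1 (rank(Σ_{l=1}^{L} Θ_l'Θ_l) = K, Π an N×K membership matrix with Π(𝓘,:) = I_{K×K}, and 𝓢 = UΛU' the leading-K eigendecomposition of 𝓢 = Σ_{l=1}^{L} 𝓡_l𝓡_l' with U'U = I_{K×K} and Λ invertible diagonal), the K×K matrix U(𝓘,:) is invertible and Π = U · (U(𝓘,:))^{-1}. -/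
open Matrix

lemma submatrix_mul_left {N K : ℕ} (g : Fin K → Fin N)
    (A : Matrix (Fin N) (Fin K) ℝ) (W : Matrix (Fin K) (Fin K) ℝ) :
    (A * W).submatrix g id = A.submatrix g id * W := by
  ext i k
  simp [Matrix.mul_apply, Matrix.submatrix_apply]

/-- **Exact recovery of memberships from the eigenvector simplex.**  Under the hypotheses of
Lemma 1, the submatrix `U(𝓘,:)` of the eigenvector matrix `U` formed by the pure-subject rows
is invertible and `Pim = U * (U(𝓘,:))⁻¹`. -/
theorem exact_recovery_membership
    (N J K L M : ℕ) (hN : 0 < N) (hJ : 0 < J) (hK : 0 < K) (hL : 0 < L) (hM : 0 < M)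
    (hKNJ : K ≤ min N J)
    (Pim : Matrix (Fin N) (Fin K) ℝ)
    (hPim01 : ∀ i k, Pim i k ∈ Set.Icc (0 : ℝ) 1)
    (hPimRow : ∀ i, ∑ k, Pim i k = 1)
    (g : Fin K → Fin N)
    (hg : Pim.submatrix g id = 1)
    (Θ : Fin L → Matrix (Fin J) (Fin K) ℝ)
    (hΘ : ∀ l j k, Θ l j k ∈ Set.Icc (0 : ℝ) (M : ℝ))
    (hrank : (∑ l, (Θ l)ᵀ * Θ l).rank = K)
    (S : Matrix (Fin N) (Fin N) ℝ)
    (hS : S = ∑ l, (Pim * (Θ l)ᵀ) * (Pim * (Θ l)ᵀ)ᵀ)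
    (U : Matrix (Fin N) (Fin K) ℝ) (Λ : Matrix (Fin K) (Fin K) ℝ)
    (hU : Uᵀ * U = 1) (hΛdiag : Λ.IsDiag) (hΛinv : IsUnit Λ.det)
    (hdecomp : S = U * Λ * Uᵀ) :
    IsUnit (U.submatrix g id).det ∧ Pim = U * (U.submatrix g id)⁻¹ := by
  set B : Matrix (Fin K) (Fin K) ℝ := ∑ l, (Θ l)ᵀ * Θ l with hB
  -- S = Pim * B * Pimᵀ
  have hSfact : S = Pim * B * Pimᵀ := by
    rw [hS, hB, Matrix.mul_sum, Matrix.sum_mul]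
    refine Finset.sum_congr rfl fun l _ => ?_
    simp [Matrix.transpose_mul, Matrix.mul_assoc]
  -- S * U = U * Λ
  have hSU : S * U = U * Λ := by
    rw [hdecomp, Matrix.mul_assoc, hU, Matrix.mul_one]
  -- U = S * U * Λ⁻¹
  have hUS : U = S * U * Λ⁻¹ := by
    rw [hSU, Matrix.mul_assoc, Matrix.mul_nonsing_inv _ hΛinv, Matrix.mul_one]
  set W : Matrix (Fin K) (Fin K) ℝ := B * Pimᵀ * U * Λ⁻¹ with hW
  have hUeq : U = Pim * W := by
    calc U = S * U * Λ⁻¹ := hUS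
    _ = Pim * B * Pimᵀ * U * Λ⁻¹ := by rw [← hSfact]
    _ = Pim * W := by rw [hW]; simp only [Matrix.mul_assoc]
  have hUg : U.submatrix g id = W := by
    rw [show U.submatrix g id = (Pim * W).submatrix g id from by rw [← hUeq],
      submatrix_mul_left, hg, Matrix.one_mul]
  -- W is invertible
  have hWW : Wᵀ * (Pimᵀ * Pim) * W = 1 := by
    rw [← hU, hUeq]
    simp only [Matrix.transpose_mul, Matrix.mul_assoc]
  have hdet : IsUnit W.det := by
    have h1 : Wᵀ.det * (Pimᵀ * Pim).det * W.det = 1 := by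
      rw [← Matrix.det_mul, ← Matrix.det_mul, hWW, Matrix.det_one]
    exact IsUnit.of_mul_eq_one _ (by rw [mul_comm] at h1; exact h1)
  refine ⟨hUg ▸ hdet, ?_⟩
  rw [hUg, hUeq, Matrix.mul_assoc, Matrix.mul_nonsing_inv _ hdet, Matrix.mul_one]
end

section
/- Mean and variance of the cross-row error terms: Fix distinct indices i ≠ h in [N]. Suppose the random variables {R_l(i,j), R_l(h,j) : l ∈ [L], j ∈ [J]} are mutually independent, with R_l(s,j) ~ Binomial(M, 𝓡_l(s,j)/M) for s ∈ {i,h}, where the numbers 𝓡_l(s,j) all lie in [0, ρ] with ρ ≤ M. Then z_{(ih)} := Σ_{l∈[L]} Σ_{j∈[J]} (R_l(i,j)R_l(h,j) − 𝓡_l(i,j)𝓡_l(h,j)) satisfies E[z_{(ih)}] = 0 and E[z_{(ih)}²] ≤ (ρ² + 2ρ³) J L. -/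
open MeasureTheory ProbabilityTheory Finset ENNReal

lemma binom_id (n : ℕ) (x y : ℝ) (hxy : x + y = 1) :
    ∑ k ∈ range (n+1), (n.choose k : ℝ) * x^k * y^(n-k) = 1 := by
  have := add_pow x y n
  rw [hxy, one_pow] at this
  rw [this]
  exact Finset.sum_congr rfl fun k hk => by ring

lemma binom_mean (n : ℕ) (x y : ℝ) (hxy : x + y = 1) :
    ∑ k ∈ range (n+1), (n.choose k : ℝ) * x^k * y^(n-k) * k = n * x := by
  cases n with
  | zero => simp
  | succ m =>
    rw [Finset.sum_range_succ']
    push_cast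
    simp only [mul_zero, add_zero, Nat.cast_zero]
    have key : ∀ k ∈ range (m+1), ((m+1).choose (k+1) : ℝ) * x^(k+1) * y^(m-k) * (↑k+1)
        = ((↑m+1) * x) * ((m.choose k : ℝ) * x^k * y^(m-k)) := by
      intro k hk
      
      have hc : ((m+1).choose (k+1) : ℝ) * (↑k+1) = (↑m+1) * (m.choose k) := by
        exact_mod_cast congrArg (fun t : ℕ => (t : ℝ)) (Nat.add_one_mul_choose_eq m k).symm
      
      linear_combination (x^(k+1) * y^(m-k)) * hc
    rw [Finset.sum_congr rfl key, ← Finset.mul_sum, binom_id m x y hxy, mul_one]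

lemma binom_sq (n : ℕ) (x y : ℝ) (hxy : x + y = 1) :
    ∑ k ∈ range (n+1), (n.choose k : ℝ) * x^k * y^(n-k) * k^2
      = n * x * (((n:ℝ)-1) * x + 1) := by
  cases n with
  | zero => simp
  | succ m =>
    rw [Finset.sum_range_succ']
    push_cast
    simp only [mul_zero, add_zero, Nat.cast_zero, ne_eq, OfNat.ofNat_ne_zero,
      not_false_eq_true, zero_pow]
    have key : ∀ k ∈ range (m+1), ((m+1).choose (k+1) : ℝ) * x^(k+1) * y^(m-k) * (↑k+1)^2
        = ((↑m+1) * x) * ((m.choose k : ℝ) * x^k * y^(m-k) * k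
            + (m.choose k : ℝ) * x^k * y^(m-k)) := by
      intro k hk
      
      have hc : ((m+1).choose (k+1) : ℝ) * (↑k+1) = (↑m+1) * (m.choose k) := by
        exact_mod_cast congrArg (fun t : ℕ => (t : ℝ)) (Nat.add_one_mul_choose_eq m k).symm
      
      linear_combination (x^(k+1) * y^(m-k) * (↑k+1)) * hc
    rw [Finset.sum_congr rfl key, ← Finset.mul_sum, Finset.sum_add_distrib,
      binom_id m x y hxy, binom_mean m x y hxy]
    ring


lemma binom_pmf_toReal (x : ℝ) (hx0 : 0 ≤ x) (hx1' : x ≤ 1)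
    (hx1 : Real.toNNReal x ≤ 1) (n : ℕ) (k : Fin (n+1)) :
    ((PMF.binomial (Real.toNNReal x) hx1 n) k).toReal
      = (n.choose k : ℝ) * x^(k:ℕ) * (1-x)^(n-(k:ℕ)) := by
  rw [PMF.binomial_apply, show ((Real.toNNReal x : NNReal) : ℝ≥0∞) = ENNReal.ofReal x from rfl]
  have h1 : (1 : ℝ≥0∞) - ENNReal.ofReal x = ENNReal.ofReal (1 - x) := by
    rw [← ENNReal.ofReal_one, ← ENNReal.ofReal_sub _ hx0]
  rw [h1, Fin.val_last]
  rw [ENNReal.toReal_mul, ENNReal.toReal_mul, ENNReal.toReal_pow, ENNReal.toReal_pow,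
    ENNReal.toReal_ofReal hx0, ENNReal.toReal_ofReal (by linarith), ENNReal.toReal_natCast]
  ring

lemma binom_integral {Ω : Type*} {mΩ : MeasurableSpace Ω} (μ : Measure Ω) [IsProbabilityMeasure μ]
    (M : ℕ) (hM : 0 < M) (r : ℝ) (hr0 : 0 ≤ r) (hrM : r ≤ (M:ℝ))
    (X : Ω → ℝ) (hmX : Measurable X)
    (hle : Real.toNNReal (r / M) ≤ 1)
    (hdist : Measure.map X μ =
      ((PMF.binomial (Real.toNNReal (r/M)) hle M).map (fun k : Fin (M+1) => (k:ℝ))).toMeasure)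
    (g : ℝ → ℝ) (hg : Measurable g) :
    ∫ ω, g (X ω) ∂μ
      = ∑ k ∈ range (M+1), (M.choose k : ℝ) * (r/M)^k * (1-r/M)^(M-k) * g k := by
  have hMpos : (0:ℝ) < M := by exact_mod_cast hM
  have hx0 : 0 ≤ r / M := div_nonneg hr0 hMpos.le
  have hx1 : r / M ≤ 1 := (div_le_one hMpos).mpr hrM
  have hcast : Measurable (fun k : Fin (M+1) => (k:ℝ)) := Measurable.of_discrete
  calc ∫ ω, g (X ω) ∂μ = ∫ t, g t ∂(Measure.map X μ) :=
        (integral_map hmX.aemeasurable hg.aestronglyMeasurable).symm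
    _ = ∫ t, g t ∂(Measure.map (fun k : Fin (M+1) => (k:ℝ))
          (PMF.binomial (Real.toNNReal (r/M)) hle M).toMeasure) := by
        rw [hdist, PMF.toMeasure_map _ _ hcast]
    _ = ∫ k : Fin (M+1), g k ∂(PMF.binomial (Real.toNNReal (r/M)) hle M).toMeasure :=
        integral_map hcast.aemeasurable hg.aestronglyMeasurable
    _ = ∑ k : Fin (M+1), ((PMF.binomial (Real.toNNReal (r/M)) hle M) k).toReal • g k :=
        PMF.integral_eq_sum _ _
    _ = ∑ k : Fin (M+1), (M.choose (k:ℕ) : ℝ) * (r/M)^(k:ℕ) * (1-r/M)^(M-(k:ℕ)) * g (k:ℕ) := by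
        refine Finset.sum_congr rfl fun k _ => ?_
        rw [binom_pmf_toReal _ hx0 hx1, smul_eq_mul]
    _ = ∑ k ∈ range (M+1), (M.choose k : ℝ) * (r/M)^k * (1-r/M)^(M-k) * g k :=
        Fin.sum_univ_eq_sum_range
          (fun k : ℕ => (M.choose k : ℝ) * (r/M)^k * (1-r/M)^(M-k) * g k) (M+1)

lemma binom_ae_bound {Ω : Type*} {mΩ : MeasurableSpace Ω} (μ : Measure Ω) [IsProbabilityMeasure μ]
    (M : ℕ) (X : Ω → ℝ) (hmX : Measurable X) (p : NNReal) (hle : p ≤ 1)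
    (hdist : Measure.map X μ =
      ((PMF.binomial p hle M).map (fun k : Fin (M+1) => (k:ℝ))).toMeasure) :
    ∀ᵐ ω ∂μ, X ω ∈ Set.Icc (0:ℝ) (M:ℝ) := by
  have hS : MeasurableSet (Set.Icc (0:ℝ) (M:ℝ))ᶜ := measurableSet_Icc.compl
  rw [ae_iff]
  have heq : {ω | ¬ X ω ∈ Set.Icc (0:ℝ) (M:ℝ)} = X ⁻¹' (Set.Icc (0:ℝ) (M:ℝ))ᶜ := rfl
  rw [heq, ← Measure.map_apply hmX hS, hdist,
    PMF.toMeasure_apply_eq_zero_iff _ hS]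
  rw [PMF.support_map]
  rw [Set.disjoint_compl_right_iff_subset]
  rintro t ⟨k, -, rfl⟩
  exact ⟨by positivity, by exact_mod_cast Nat.cast_le.mpr (Nat.lt_succ_iff.mp k.isLt)⟩

lemma binom_moment_one {Ω : Type*} {mΩ : MeasurableSpace Ω} (μ : Measure Ω)
    [IsProbabilityMeasure μ]
    (M : ℕ) (hM : 0 < M) (r : ℝ) (hr0 : 0 ≤ r) (hrM : r ≤ (M:ℝ))
    (X : Ω → ℝ) (hmX : Measurable X) (hle : Real.toNNReal (r / M) ≤ 1)
    (hdist : Measure.map X μ =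
      ((PMF.binomial (Real.toNNReal (r/M)) hle M).map (fun k : Fin (M+1) => (k:ℝ))).toMeasure) :
    ∫ ω, X ω ∂μ = r := by
  have hMpos : (0:ℝ) < M := by exact_mod_cast hM
  have h := binom_integral μ M hM r hr0 hrM X hmX hle hdist (fun t => t) measurable_id
  rw [h, binom_mean M (r/M) (1-r/M) (by ring)]
  field_simp

lemma binom_moment_two {Ω : Type*} {mΩ : MeasurableSpace Ω} (μ : Measure Ω)
    [IsProbabilityMeasure μ]
    (M : ℕ) (hM : 0 < M) (r : ℝ) (hr0 : 0 ≤ r) (hrM : r ≤ (M:ℝ))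
    (X : Ω → ℝ) (hmX : Measurable X) (hle : Real.toNNReal (r / M) ≤ 1)
    (hdist : Measure.map X μ =
      ((PMF.binomial (Real.toNNReal (r/M)) hle M).map (fun k : Fin (M+1) => (k:ℝ))).toMeasure) :
    ∫ ω, (X ω)^2 ∂μ ≤ r + r^2 := by
  have hMpos : (0:ℝ) < M := by exact_mod_cast hM
  have h := binom_integral μ M hM r hr0 hrM X hmX hle hdist (fun t => t^2)
    (measurable_id.pow_const 2)
  rw [h, binom_sq M (r/M) (1-r/M) (by ring)]
  have hMr : (M:ℝ) * (r/M) = r := by field_simp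
  have hx0 : 0 ≤ r / M := div_nonneg hr0 hMpos.le
  nlinarith [hx0, hr0, hMpos]


section helpers
lemma memLp_of_ae_Icc {Ω : Type*} {mΩ : MeasurableSpace Ω} (μ : Measure Ω) [IsFiniteMeasure μ]
    (X : Ω → ℝ) (hm : Measurable X) (C : ℝ) (hb : ∀ᵐ ω ∂μ, |X ω| ≤ C) (p : ENNReal) :
    MemLp X p μ :=
  MemLp.of_bound hm.aestronglyMeasurable C (hb.mono fun ω hω => by rwa [Real.norm_eq_abs])
end helpers


/-- **Mean and variance of the cross-row error terms.**  For distinct rows `i ≠ h`, if the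
variables `R l s j` for `s ∈ {i, h}`, `l ∈ [L]`, `j ∈ [J]` are mutually independent with
`R l s j ~ Binomial(M, 𝓡 l s j / M)` and `𝓡 l s j ∈ [0, ρ]`, `ρ ≤ M`, then
`z := ∑ l ∑ j (R l i j · R l h j − 𝓡 l i j · 𝓡 l h j)` satisfies `E[z] = 0` and
`E[z²] ≤ (ρ² + 2ρ³) J L`. -/
theorem cross_row_error_mean_variance
    {Ω : Type*} {mΩ : MeasurableSpace Ω} (μ : Measure Ω) [IsProbabilityMeasure μ]
    (N J L M : ℕ) (hM : 0 < M) (ρ : ℝ) (hρ : 0 < ρ) (hρM : ρ ≤ (M : ℝ))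
    (i h : Fin N) (hih : i ≠ h)
    (Rpop : Fin L → Fin N → Fin J → ℝ)
    (hRi : ∀ l j, Rpop l i j ∈ Set.Icc (0 : ℝ) ρ)
    (hRh : ∀ l j, Rpop l h j ∈ Set.Icc (0 : ℝ) ρ)
    (X : Fin L → Fin N → Fin J → Ω → ℝ)
    (hmX : ∀ l s j, Measurable (X l s j))
    (hindep : iIndepFun
      (fun p : Fin L × Bool × Fin J => X p.1 (if p.2.1 then i else h) p.2.2) μ)
    (hdisti : ∀ l j, Measure.map (X l i j) μ =
      ((PMF.binomial (Real.toNNReal (Rpop l i j / M))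
          (Real.toNNReal_le_one.mpr
            ((div_le_one (by exact_mod_cast hM)).mpr ((hRi l j).2.trans hρM))) M).map
        (fun k : Fin (M + 1) => (k : ℝ))).toMeasure)
    (hdisth : ∀ l j, Measure.map (X l h j) μ =
      ((PMF.binomial (Real.toNNReal (Rpop l h j / M))
          (Real.toNNReal_le_one.mpr
            ((div_le_one (by exact_mod_cast hM)).mpr ((hRh l j).2.trans hρM))) M).map
        (fun k : Fin (M + 1) => (k : ℝ))).toMeasure) :
    (∫ ω, (∑ l, ∑ j, (X l i j ω * X l h j ω - Rpop l i j * Rpop l h j)) ∂μ) = 0 ∧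
      (∫ ω, (∑ l, ∑ j, (X l i j ω * X l h j ω - Rpop l i j * Rpop l h j)) ^ 2 ∂μ) ≤
        (ρ ^ 2 + 2 * ρ ^ 3) * J * L := by
    classical
  -- abbreviations
  set T : Fin L × Fin J → Ω → ℝ :=
    fun p ω => X p.1 i p.2 ω * X p.1 h p.2 ω - Rpop p.1 i p.2 * Rpop p.1 h p.2 with hT
  have hsum_eq : (fun ω => ∑ l, ∑ j, (X l i j ω * X l h j ω - Rpop l i j * Rpop l h j))
      = fun ω => ∑ p : Fin L × Fin J, T p ω := by
    funext ω; rw [Fintype.sum_prod_type]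
  -- a.e. bounds
  have haeY : ∀ l j, ∀ᵐ ω ∂μ, X l i j ω ∈ Set.Icc (0:ℝ) (M:ℝ) := fun l j =>
    binom_ae_bound μ M (X l i j) (hmX l i j) _ _ (hdisti l j)
  have haeZ : ∀ l j, ∀ᵐ ω ∂μ, X l h j ω ∈ Set.Icc (0:ℝ) (M:ℝ) := fun l j =>
    binom_ae_bound μ M (X l h j) (hmX l h j) _ _ (hdisth l j)
  -- moments
  have hmeanY : ∀ l j, ∫ ω, X l i j ω ∂μ = Rpop l i j := fun l j =>
    binom_moment_one μ M hM _ (hRi l j).1 ((hRi l j).2.trans hρM) _ (hmX l i j) _ (hdisti l j)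
  have hmeanZ : ∀ l j, ∫ ω, X l h j ω ∂μ = Rpop l h j := fun l j =>
    binom_moment_one μ M hM _ (hRh l j).1 ((hRh l j).2.trans hρM) _ (hmX l h j) _ (hdisth l j)
  have hsqY : ∀ l j, ∫ ω, (X l i j ω)^2 ∂μ ≤ Rpop l i j + (Rpop l i j)^2 := fun l j =>
    binom_moment_two μ M hM _ (hRi l j).1 ((hRi l j).2.trans hρM) _ (hmX l i j) _ (hdisti l j)
  have hsqZ : ∀ l j, ∫ ω, (X l h j ω)^2 ∂μ ≤ Rpop l h j + (Rpop l h j)^2 := fun l j =>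
    binom_moment_two μ M hM _ (hRh l j).1 ((hRh l j).2.trans hρM) _ (hmX l h j) _ (hdisth l j)
  -- independence of the two factors
  have hYZ : ∀ l j, IndepFun (X l i j) (X l h j) μ := by
    intro l j
    have hne : ((l, true, j) : Fin L × Bool × Fin J) ≠ (l, false, j) := by simp
    exact hindep.indepFun hne
  -- measurability of products
  have hmYZ : ∀ l j, Measurable (fun ω => X l i j ω * X l h j ω) :=
    fun l j => (hmX l i j).mul (hmX l h j)
  -- product bounded, Memℒp
  have haeYZ : ∀ l j, ∀ᵐ ω ∂μ, |X l i j ω * X l h j ω| ≤ (M:ℝ)*(M:ℝ) := by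
    intro l j
    filter_upwards [haeY l j, haeZ l j] with ω h1 h2
    rw [abs_mul]
    exact mul_le_mul (by rw [abs_of_nonneg h1.1]; exact h1.2)
      (by rw [abs_of_nonneg h2.1]; exact h2.2) (abs_nonneg _) (by positivity)
  have hmemYZ : ∀ l j, MemLp (fun ω => X l i j ω * X l h j ω) 2 μ := fun l j =>
    memLp_of_ae_Icc μ _ (hmYZ l j) _ (haeYZ l j) 2
  have hmemT : ∀ p : Fin L × Fin J, MemLp (T p) 2 μ := fun p =>
    (hmemYZ p.1 p.2).sub (memLp_const _)
  have hintT : ∀ p : Fin L × Fin J, Integrable (T p) μ := fun p =>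
    (hmemT p).integrable one_le_two
  -- mean of each T
  have hEYZ : ∀ l j, ∫ ω, X l i j ω * X l h j ω ∂μ = Rpop l i j * Rpop l h j := by
    intro l j
    have := (hYZ l j).integral_mul_eq_mul_integral (hmX l i j).aestronglyMeasurable (hmX l h j).aestronglyMeasurable
    rw [hmeanY l j, hmeanZ l j] at this
    simpa [Pi.mul_apply] using this
  have hET : ∀ p : Fin L × Fin J, ∫ ω, T p ω ∂μ = 0 := by
    rintro ⟨l, j⟩
    have : T (l, j) = fun ω => X l i j ω * X l h j ω - Rpop l i j * Rpop l h j := rfl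
    rw [this, integral_sub ((hmemYZ l j).integrable one_le_two) (integrable_const _),
      hEYZ l j, integral_const]
    simp
  -- first conclusion
  have hmean0 : (∫ ω, (∑ l, ∑ j, (X l i j ω * X l h j ω - Rpop l i j * Rpop l h j)) ∂μ) = 0 := by
    rw [show (fun ω => ∑ l, ∑ j, (X l i j ω * X l h j ω - Rpop l i j * Rpop l h j))
        = fun ω => ∑ p : Fin L × Fin J, T p ω from hsum_eq]
    rw [integral_finset_sum _ fun p _ => hintT p]
    simp [hET]
  refine ⟨hmean0, ?_⟩
  -- pairwise independence of the T's
  have hTpair : ∀ p q : Fin L × Fin J, p ≠ q → IndepFun (T p) (T q) μ := by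
    rintro ⟨l, j⟩ ⟨l', j'⟩ hpq
    have hik : ((l, true, j) : Fin L × Bool × Fin J) ≠ (l', true, j') := by
      intro hc
      simp only [Prod.mk.injEq] at hc
      exact hpq (by rw [hc.1, hc.2.2])
    have hjl : ((l, false, j) : Fin L × Bool × Fin J) ≠ (l', false, j') := by
      intro hc
      simp only [Prod.mk.injEq] at hc
      exact hpq (by rw [hc.1, hc.2.2])
    have base := hindep.indepFun_prodMk_prodMk (fun idx => hmX _ _ _)
      (l, true, j) (l, false, j) (l', true, j') (l', false, j')
      hik (by simp) (by simp) hjl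
    have φm : Measurable (fun v : ℝ × ℝ => v.1 * v.2 - Rpop l i j * Rpop l h j) := by fun_prop
    have ψm : Measurable (fun v : ℝ × ℝ => v.1 * v.2 - Rpop l' i j' * Rpop l' h j') := by fun_prop
    exact base.comp φm ψm
  -- variance of each T
  have hVarT : ∀ p : Fin L × Fin J, variance (T p) μ ≤ ρ^2 + 2*ρ^3 := by
    rintro ⟨l, j⟩
    have hYZsq : IndepFun (fun ω => (X l i j ω)^2) (fun ω => (X l h j ω)^2) μ :=
      (hYZ l j).comp (measurable_id.pow_const 2) (measurable_id.pow_const 2)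
    have hEsq : ∫ ω, (X l i j ω * X l h j ω)^2 ∂μ
        = (∫ ω, (X l i j ω)^2 ∂μ) * (∫ ω, (X l h j ω)^2 ∂μ) := by
      have h2 := hYZsq.integral_mul_eq_mul_integral ((hmX l i j).pow_const 2).aestronglyMeasurable
        ((hmX l h j).pow_const 2).aestronglyMeasurable
      simp only [mul_pow]
      simpa [Pi.mul_apply] using h2
    have hint2 : Integrable (fun ω => X l i j ω * X l h j ω) μ :=
      (hmemYZ l j).integrable one_le_two
    have hint1 : Integrable (fun ω => (X l i j ω * X l h j ω)^2) μ := by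
      refine (memLp_of_ae_Icc μ _ ((hmYZ l j).pow_const 2) (((M:ℝ)*M)^2) ?_ 1).integrable le_rfl
      filter_upwards [haeYZ l j] with ω hω
      calc |(X l i j ω * X l h j ω)^2| = |X l i j ω * X l h j ω|^2 := by
            rw [abs_pow]
        _ ≤ ((M:ℝ)*M)^2 := by
            apply pow_le_pow_left₀ (abs_nonneg _) hω
    have hTsq : ∫ ω, (T (l,j) ω)^2 ∂μ
        = (∫ ω, (X l i j ω)^2 ∂μ) * (∫ ω, (X l h j ω)^2 ∂μ)
          - (Rpop l i j * Rpop l h j)^2 := by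
      have hexp : ∀ ω, (T (l,j) ω)^2
          = (X l i j ω * X l h j ω)^2
            - (2*(Rpop l i j * Rpop l h j)) * (X l i j ω * X l h j ω)
            + (Rpop l i j * Rpop l h j)^2 := fun ω => by simp only [hT]; ring
      calc ∫ ω, (T (l,j) ω)^2 ∂μ
          = ∫ ω, ((X l i j ω * X l h j ω)^2
            - (2*(Rpop l i j * Rpop l h j)) * (X l i j ω * X l h j ω)
            + (Rpop l i j * Rpop l h j)^2) ∂μ := by simp only [hexp]
        _ = (∫ ω, ((X l i j ω * X l h j ω)^2
            - (2*(Rpop l i j * Rpop l h j)) * (X l i j ω * X l h j ω)) ∂μ)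
            + ∫ ω, (Rpop l i j * Rpop l h j)^2 ∂μ :=
          integral_add (hint1.sub (hint2.const_mul _)) (integrable_const _)
        _ = (∫ ω, (X l i j ω * X l h j ω)^2 ∂μ)
            - (2*(Rpop l i j * Rpop l h j)) * (∫ ω, X l i j ω * X l h j ω ∂μ)
            + (Rpop l i j * Rpop l h j)^2 := by
          rw [integral_sub hint1 (hint2.const_mul _), integral_const_mul, integral_const]
          simp
        _ = (∫ ω, (X l i j ω)^2 ∂μ) * (∫ ω, (X l h j ω)^2 ∂μ)
            - (Rpop l i j * Rpop l h j)^2 := by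
          rw [hEsq, hEYZ l j]; ring
    have hvd : variance (T (l,j)) μ = ∫ ω, (T (l,j) ω)^2 ∂μ - (∫ ω, T (l,j) ω ∂μ)^2 := by
      rw [variance_eq_sub (hmemT (l,j))]
      rfl
    rw [hvd, hET (l,j), hTsq]
    have hq1 : 0 ≤ ∫ ω, (X l i j ω)^2 ∂μ := integral_nonneg fun ω => sq_nonneg _
    have hq2 : 0 ≤ ∫ ω, (X l h j ω)^2 ∂μ := integral_nonneg fun ω => sq_nonneg _
    have ha0 := (hRi l j).1; have ha1 := (hRi l j).2
    have hb0 := (hRh l j).1; have hb1 := (hRh l j).2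
    have h12 : (∫ ω, (X l i j ω)^2 ∂μ) * (∫ ω, (X l h j ω)^2 ∂μ)
        ≤ (Rpop l i j + (Rpop l i j)^2) * (Rpop l h j + (Rpop l h j)^2) :=
      mul_le_mul (hsqY l j) (hsqZ l j) hq2 (by positivity)
    have e1 : Rpop l i j * Rpop l h j ≤ ρ * ρ :=
      mul_le_mul ha1 hb1 hb0 hρ.le
    have e2 : Rpop l i j * (Rpop l h j * Rpop l h j) ≤ ρ * (ρ * ρ) :=
      mul_le_mul ha1 (mul_le_mul hb1 hb1 hb0 hρ.le) (by positivity) hρ.le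
    have e3 : Rpop l i j * Rpop l i j * Rpop l h j ≤ ρ * ρ * ρ :=
      mul_le_mul (mul_le_mul ha1 ha1 ha0 hρ.le) hb1 hb0 (by positivity)
    nlinarith [h12, e1, e2, e3]
  -- sum of variances
  have hF : MemLp (∑ p : Fin L × Fin J, T p) 2 μ :=
    memLp_finset_sum' _ (fun p _ => hmemT p)
  have hFfun : (∑ p : Fin L × Fin J, T p) = fun ω => ∑ p : Fin L × Fin J, T p ω := by
    funext ω; simp [Finset.sum_apply]
  have hFmean : ∫ ω, (∑ p : Fin L × Fin J, T p) ω ∂μ = 0 := by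
    rw [hFfun, integral_finset_sum _ fun p _ => hintT p]
    simp [hET]
  have hvarsum := IndepFun.variance_sum (μ := μ) (X := T) (s := Finset.univ)
    (fun p _ => hmemT p) (fun p _ q _ hpq => hTpair p q hpq)
  have hvd2 : variance (∑ p : Fin L × Fin J, T p) μ
      = ∫ ω, ((∑ p : Fin L × Fin J, T p) ω)^2 ∂μ
        - (∫ ω, (∑ p : Fin L × Fin J, T p) ω ∂μ)^2 := by
    rw [variance_eq_sub hF]; rfl
  have hgoal_eq : (∫ ω, (∑ l, ∑ j, (X l i j ω * X l h j ω - Rpop l i j * Rpop l h j)) ^ 2 ∂μ)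
      = ∫ ω, ((∑ p : Fin L × Fin J, T p) ω)^2 ∂μ := by
    apply integral_congr_ae
    filter_upwards with ω
    simp only [hFfun, hT, Fintype.sum_prod_type, Finset.sum_apply]
  rw [hgoal_eq]
  have : ∫ ω, ((∑ p : Fin L × Fin J, T p) ω)^2 ∂μ = variance (∑ p : Fin L × Fin J, T p) μ := by
    rw [hvd2, hFmean]; ring
  rw [this, hvarsum]
  calc ∑ p : Fin L × Fin J, variance (T p) μ
      ≤ ∑ _p : Fin L × Fin J, (ρ^2 + 2*ρ^3) := Finset.sum_le_sum fun p _ => hVarT p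
    _ = (ρ ^ 2 + 2 * ρ ^ 3) * J * L := by
      rw [Finset.sum_const, Finset.card_univ, Fintype.card_prod, Fintype.card_fin,
        Fintype.card_fin, nsmul_eq_mul]
      push_cast
      ring
end
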